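/- Let n ≥ 1, let S_n be the star graph on vertices {0,1,...,n-1}, and let M be one of PsEnd(S_n), PswEnd(S_n), IEnd(S_n), PEnd(S_n), PwEnd(S_n). For α, β ∈ M, α J β in M (Green's J-relation) if and only if one of the following holds: (1) |im(α)| = |im(β)| ≤ 1; (2) |im(α)| = |im(β)| ≥ 2, (0 ∈ dom(α) iff 0 ∈ dom(β)), and (0 ∈ im(α) iff 0 ∈ im(β)). -/

import Mathlib

def pmul {V : Type*} (f g : V → Option V) : V → Option V := fun x => (f x).bind g

def pdom {V : Type*} (f : V → Option V) : Set V := {x | f x ≠ none}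

def pim {V : Type*} (f : V → Option V) : Set V := {y | ∃ x, f x = some y}

def pker {V : Type*} (f : V → Option V) : V → V → Prop := fun x y => f x ≠ none ∧ f x = f y

def PInj {V : Type*} (f : V → Option V) : Prop := ∀ u v a, f u = some a → f v = some a → u = v

def edge {n : ℕ} (u v : Fin n) : Prop := (u.val = 0 ∧ v.val ≠ 0) ∨ (v.val = 0 ∧ u.val ≠ 0)

def IsPEnd {n : ℕ} (α : Fin n → Option (Fin n)) : Prop :=
  ∀ u v a b, α u = some a → α v = some b → edge u v → edge a b

def IsPwEnd {n : ℕ} (α : Fin n → Option (Fin n)) : Prop :=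
  ∀ u v a b, α u = some a → α v = some b → edge u v → a ≠ b → edge a b

def IsPsEnd {n : ℕ} (α : Fin n → Option (Fin n)) : Prop :=
  ∀ u v a b, α u = some a → α v = some b → (edge u v ↔ edge a b)

def IsPswEnd {n : ℕ} (α : Fin n → Option (Fin n)) : Prop :=
  ∀ u v a b, α u = some a → α v = some b → ((edge u v ∧ a ≠ b) ↔ edge a b)

def PEndS (n : ℕ) : Set (Fin n → Option (Fin n)) := {α | IsPEnd α}
def PwEndS (n : ℕ) : Set (Fin n → Option (Fin n)) := {α | IsPwEnd α}
def PsEndS (n : ℕ) : Set (Fin n → Option (Fin n)) := {α | IsPsEnd α}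
def PswEndS (n : ℕ) : Set (Fin n → Option (Fin n)) := {α | IsPswEnd α}
def IEndS (n : ℕ) : Set (Fin n → Option (Fin n)) := {α | PInj α ∧ IsPEnd α}
def PAutS (n : ℕ) : Set (Fin n → Option (Fin n)) := {α | PInj α ∧ IsPsEnd α}

def RegularIn {V : Type*} (M : Set (V → Option V)) (a : V → Option V) : Prop :=
  ∃ b ∈ M, pmul (pmul a b) a = a

def GreenL {V : Type*} (M : Set (V → Option V)) (a b : V → Option V) : Prop :=
  (∃ g ∈ M, a = pmul g b) ∧ (∃ g ∈ M, b = pmul g a)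

def GreenR {V : Type*} (M : Set (V → Option V)) (a b : V → Option V) : Prop :=
  (∃ g ∈ M, a = pmul b g) ∧ (∃ g ∈ M, b = pmul a g)

def GreenH {V : Type*} (M : Set (V → Option V)) (a b : V → Option V) : Prop :=
  GreenL M a b ∧ GreenR M a b

def GreenJ {V : Type*} (M : Set (V → Option V)) (a b : V → Option V) : Prop :=
  (∃ g ∈ M, ∃ h ∈ M, a = pmul (pmul g b) h) ∧ (∃ g ∈ M, ∃ h ∈ M, b = pmul (pmul g a) h)

/-!
Composition never enlarges images, so `J`-related maps have images of the same size. Let `z` be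
the centre. If `z ∈ dom (g β h)` but `z ∉ dom β`, the weak endomorphism `g` has to send all of
`dom (g β h)` to `g z` (two distinct images would be adjacent, so one of them would be the centre,
where `β` is undefined), and the rank drops to one. If `z ∈ im β` and `g β h` has the rank of `β`,
then `h` is defined at `z`; weakness of `h` at `z` and a leaf then puts `z` into `im (g β h)`.

Conversely, write `α = g β h` where `h` inverts a bijection `e : im α → im β` that fixes the
centre, and `g` is `α` followed by `w ∘ e` for a section `w` of `β` that takes the value `z`
whenever `β` allows it. On `im α` the map `w ∘ e` either preserves or swaps centre and leaves, so
it respects adjacency, which keeps `g` in each of the five monoids.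
-/

open Set

section PartialMaps

variable {V : Type*}

lemma pmul_assoc (f g h : V → Option V) : pmul (pmul f g) h = pmul f (pmul g h) :=
  funext fun x => Option.bind_assoc (f x) g h

lemma pim_pmul_subset (f g : V → Option V) : pim (pmul f g) ⊆ pim g := by
  rintro y ⟨x, hx⟩
  obtain ⟨a, -, ha⟩ := Option.bind_eq_some_iff.1 hx
  exact ⟨a, ha⟩

lemma pdom_pmul_subset (f g : V → Option V) : pdom (pmul f g) ⊆ pdom f := by
  intro x hx hfx
  exact hx (by simp [pmul, hfx])

lemma ncard_pim_pmul_le [Finite V] (f g : V → Option V) :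
    (pim (pmul f g)).ncard ≤ (pim f ∩ pdom g).ncard := by
  have hsub : pim (pmul f g) ⊆ (fun a => (g a).getD a) '' (pim f ∩ pdom g) := by
    rintro y ⟨x, hx⟩
    obtain ⟨a, hxa, hay⟩ := Option.bind_eq_some_iff.1 hx
    exact ⟨a, ⟨⟨x, hxa⟩, by simp [pdom, hay]⟩, by simp [hay]⟩
  exact (ncard_le_ncard hsub).trans (ncard_image_le (toFinite _))

lemma ncard_pim_pmul_le_left [Finite V] (f g : V → Option V) :
    (pim (pmul f g)).ncard ≤ (pim f).ncard :=
  (ncard_pim_pmul_le f g).trans (ncard_le_ncard inter_subset_left)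

lemma ncard_pim_pmul_pmul_le [Finite V] (g β h : V → Option V) :
    (pim (pmul (pmul g β) h)).ncard ≤ (pim β).ncard :=
  (ncard_pim_pmul_le_left _ h).trans (ncard_le_ncard (pim_pmul_subset g β))

lemma exists_section (β : V → Option V) : ∃ w : V → V, ∀ b ∈ pim β, β (w b) = some b := by
  classical
  exact ⟨fun b => if hb : b ∈ pim β then hb.choose else b, fun b hb => by
    simpa only [dif_pos hb] using hb.choose_spec⟩

lemma exists_section_eq_iff (β : V → Option V) (z : V) :
    ∃ w : V → V, ∀ b ∈ pim β, β (w b) = some b ∧ (w b = z ↔ β z = some b) := by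
  classical
  obtain ⟨w, hw⟩ := exists_section β
  refine ⟨fun b => if β z = some b then z else w b, fun b hb => ?_⟩
  dsimp only
  by_cases hzb : β z = some b
  · rw [if_pos hzb]
    exact ⟨hzb, iff_of_true rfl hzb⟩
  · rw [if_neg hzb]
    exact ⟨hw b hb, iff_of_false (fun hwz => hzb (hwz ▸ hw b hb)) hzb⟩

end PartialMaps

namespace Set

variable {X : Type*} [Finite X] {s t : Set X}

lemma exists_bijOn_of_ncard_eq (hcard : s.ncard = t.ncard) : ∃ e : X → X, BijOn e s t := by
  rcases s.eq_empty_or_nonempty with rfl | ⟨a, -⟩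
  · rw [ncard_empty, eq_comm, ncard_eq_zero] at hcard
    subst hcard
    exact ⟨id, bijOn_empty id⟩
  · have : Nonempty X := ⟨a⟩
    refine (toFinite s).exists_bijOn_of_encard_eq ?_
    rw [← (toFinite s).cast_ncard_eq, ← (toFinite t).cast_ncard_eq, hcard]

lemma exists_bijOn_forall_eq_iff (hcard : s.ncard = t.ncard) {z : X} (hz : z ∈ s ↔ z ∈ t) :
    ∃ e : X → X, BijOn e s t ∧ ∀ p ∈ s, (e p = z ↔ p = z) := by
  classical
  have hcard' : (s \ {z}).ncard = (t \ {z}).ncard := by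
    by_cases hzs : z ∈ s
    · rw [ncard_sdiff_singleton_of_mem hzs, ncard_sdiff_singleton_of_mem (hz.1 hzs), hcard]
    · rw [sdiff_singleton_eq_self hzs, sdiff_singleton_eq_self (mt hz.2 hzs), hcard]
  obtain ⟨f, hf⟩ := exists_bijOn_of_ncard_eq hcard'
  have he : BijOn (Function.update f z z) (s \ {z}) (t \ {z}) :=
    hf.congr fun p hp => (Function.update_of_ne hp.2 _ _).symm
  refine ⟨Function.update f z z, ?_, fun p hp => ?_⟩
  · by_cases hzs : z ∈ s
    · have := he.insert (a := z) (by simp)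
      rwa [Function.update_self, insert_sdiff_singleton, insert_sdiff_singleton,
        insert_eq_of_mem hzs, insert_eq_of_mem (hz.1 hzs)] at this
    · rwa [sdiff_singleton_eq_self hzs, sdiff_singleton_eq_self (mt hz.2 hzs)] at he
  · by_cases hpz : p = z
    · simp [hpz]
    · simpa [hpz] using (he.mapsTo ⟨hp, hpz⟩).2

end Set

section Star

variable {n : ℕ} {z : Fin n}

lemma edge_iff (hz : z.val = 0) {u v : Fin n} : edge u v ↔ ¬(u = z ↔ v = z) := by
  have hcenter : ∀ w : Fin n, w.val = 0 ↔ w = z := fun w => by rw [← hz, Fin.val_inj]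
  simp only [edge, ne_eq, hcenter]
  tauto

lemma edge_irrefl (u : Fin n) : ¬ edge u u := by
  rintro (⟨h1, h2⟩ | ⟨h1, h2⟩) <;> exact h2 h1

lemma edge_congr (hz : z.val = 0) {u v u' v' : Fin n} (hu : u' = z ↔ u = z)
    (hv : v' = z ↔ v = z) : edge u' v' ↔ edge u v := by
  rw [edge_iff hz, edge_iff hz, hu, hv]

lemma edge_congr_not (hz : z.val = 0) {u v u' v' : Fin n} (hu : u' = z ↔ u ≠ z)
    (hv : v' = z ↔ v ≠ z) : edge u' v' ↔ edge u v := by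
  rw [edge_iff hz, edge_iff hz, hu, hv]
  tauto

lemma eq_or_eq_of_edge (hz : z.val = 0) {u v : Fin n} (h : edge u v) : u = z ∨ v = z := by
  rw [edge_iff hz] at h
  tauto

lemma IsPwEnd.eq_center_or_eq_center (hz : z.val = 0) {γ : Fin n → Option (Fin n)} (hγ : IsPwEnd γ)
    {m a b : Fin n} (ha : γ z = some a) (hb : γ m = some b) (hm : m ≠ z) (hab : a ≠ b) :
    a = z ∨ b = z :=
  eq_or_eq_of_edge hz (hγ z m a b ha hb ((edge_iff hz).2 (by simp [hm])) hab)

lemma IsPwEnd.eq_iff_ne_center (hz : z.val = 0) {β : Fin n → Option (Fin n)} (hβ : IsPwEnd β)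
    {v₀ : Fin n} (hv : β z = some v₀) (hv₀ : v₀ ≠ z) : ∀ b ∈ pim β, (b = v₀ ↔ b ≠ z) := by
  rintro b ⟨x, hx⟩
  refine ⟨fun hb => hb ▸ hv₀, fun hbz => ?_⟩
  by_cases hxz : x = z
  · subst hxz
    exact Option.some_injective _ (hx.symm.trans hv)
  · by_contra hb
    rcases hβ.eq_center_or_eq_center hz hv hx hxz (Ne.symm hb) with h | h
    exacts [hv₀ h, hbz h]

lemma pim_pmul_subsingleton (hz : z.val = 0) {g γ : Fin n → Option (Fin n)} (hg : IsPwEnd g)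
    (hzg : z ∈ pdom (pmul g γ)) (hγ : z ∉ pdom γ) : (pim (pmul g γ)).Subsingleton := by
  obtain ⟨c, hc⟩ := Option.ne_none_iff_exists'.1 hzg
  obtain ⟨w₀, hgz, hγw₀⟩ := Option.bind_eq_some_iff.1 hc
  have hw : ∀ x w y, g x = some w → γ w = some y → w = w₀ := by
    intro x w y hgx hγw
    by_cases hxz : x = z
    · subst hxz
      exact Option.some_injective _ (hgx.symm.trans hgz)
    · by_contra hne
      rcases hg.eq_center_or_eq_center hz hgz hgx hxz (Ne.symm hne) with h | h
      · exact hγ (by simp [pdom, ← h, hγw₀])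
      · exact hγ (by simp [pdom, ← h, hγw])
  suffices ∀ y ∈ pim (pmul g γ), y = c from
    fun y hy y' hy' => (this y hy).trans (this y' hy').symm
  rintro y ⟨x, hx⟩
  obtain ⟨w, hgx, hγw⟩ := Option.bind_eq_some_iff.1 hx
  obtain rfl := hw x w y hgx hγw
  exact Option.some_injective _ (hγw.symm.trans hγw₀)

lemma center_mem_pim_pmul_pmul (hz : z.val = 0) {g β h : Fin n → Option (Fin n)}
    (hh : IsPwEnd h) (hzβ : z ∈ pim β)
    (hcard : (pim β).ncard ≤ (pim (pmul (pmul g β) h)).ncard)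
    (h2 : 2 ≤ (pim (pmul (pmul g β) h)).ncard) : z ∈ pim (pmul (pmul g β) h) := by
  set f := pmul g β
  have hf : pim f = pim β := eq_of_subset_of_ncard_le (pim_pmul_subset g β)
    (hcard.trans (ncard_pim_pmul_le_left f h))
  have hzf : z ∈ pim f := hf ▸ hzβ
  have hzh : z ∈ pdom h := by
    by_contra hzh
    have hlt : (pim f ∩ pdom h).ncard < (pim f).ncard :=
      ncard_lt_ncard ⟨inter_subset_left, fun hsub => hzh (hsub hzf).2⟩
    have := ncard_pim_pmul_le f h
    rw [← hf] at hcard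
    omega
  obtain ⟨a, ha⟩ := Option.ne_none_iff_exists'.1 hzh
  obtain ⟨x, hx⟩ := hzf
  have haα : a ∈ pim (pmul f h) := ⟨x, by simp [pmul, hx, ha]⟩
  obtain ⟨b, hb, hba⟩ := exists_ne_of_one_lt_ncard h2 a
  obtain ⟨y, hy⟩ := id hb
  obtain ⟨m, -, hmb⟩ := Option.bind_eq_some_iff.1 hy
  have hm : m ≠ z := fun hmz => hba (Option.some_injective _ (hmb.symm.trans (hmz ▸ ha)))
  rcases hh.eq_center_or_eq_center hz ha hmb hm (Ne.symm hba) with h | h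
  exacts [h ▸ haα, h ▸ hb]

lemma center_mem_of_eq_pmul_pmul (hz : z.val = 0) {α β g h : Fin n → Option (Fin n)}
    (hg : IsPwEnd g) (hh : IsPwEnd h) (hα : α = pmul (pmul g β) h)
    (hcard : (pim β).ncard ≤ (pim α).ncard) (h2 : 2 ≤ (pim α).ncard) :
    (z ∈ pdom α → z ∈ pdom β) ∧ (z ∈ pim β → z ∈ pim α) := by
  subst hα
  refine ⟨fun hzα => ?_, fun hzβ => center_mem_pim_pmul_pmul hz hh hzβ hcard h2⟩
  by_contra hzβ
  rw [pmul_assoc] at hzα h2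
  have := ncard_le_one_iff_subsingleton.2
    (pim_pmul_subsingleton hz hg hzα fun hz' => hzβ (pdom_pmul_subset β h hz'))
  omega

end Star

def IsStarEndMonoid (n : ℕ) (M : Set (Fin n → Option (Fin n))) : Prop :=
  M = PsEndS n ∨ M = PswEndS n ∨ M = IEndS n ∨ M = PEndS n ∨ M = PwEndS n

namespace IsStarEndMonoid

variable {n : ℕ} {M : Set (Fin n → Option (Fin n))} {z : Fin n}

lemma isPwEnd (hM : IsStarEndMonoid n M) {γ : Fin n → Option (Fin n)} (hγ : γ ∈ M) :
    IsPwEnd γ := by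
  rcases hM with rfl | rfl | rfl | rfl | rfl
  · exact fun u v a b hu hv he _ => (hγ u v a b hu hv).1 he
  · exact fun u v a b hu hv he hab => (hγ u v a b hu hv).1 ⟨he, hab⟩
  · exact fun u v a b hu hv he _ => hγ.2 u v a b hu hv he
  · exact fun u v a b hu hv he _ => hγ u v a b hu hv he
  · exact hγ

lemma pAutS_subset (hM : IsStarEndMonoid n M) : PAutS n ⊆ M := by
  rintro γ ⟨hinj, hγ⟩
  have hPEnd : IsPEnd γ := fun u v a b hu hv => (hγ u v a b hu hv).1
  rcases hM with rfl | rfl | rfl | rfl | rfl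
  · exact hγ
  · intro u v a b hu hv
    rw [hγ u v a b hu hv]
    exact ⟨fun h => h.1, fun h => ⟨h, fun hab => edge_irrefl a (hab ▸ h)⟩⟩
  · exact ⟨hinj, hPEnd⟩
  · exact hPEnd
  · exact fun u v a b hu hv he _ => hPEnd u v a b hu hv he

lemma map_mem (hM : IsStarEndMonoid n M) {α : Fin n → Option (Fin n)} (hα : α ∈ M)
    {t : Fin n → Fin n} (ht : InjOn t (pim α))
    (hpres : ∀ u v a b, α u = some a → α v = some b → edge u v → (edge (t a) (t b) ↔ edge a b))
    (hrefl : ∀ a ∈ pim α, ∀ b ∈ pim α, edge (t a) (t b) → edge a b) :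
    (fun x => (α x).map t) ∈ M := by
  have hmap : ∀ {u c}, (α u).map t = some c → ∃ a, α u = some a ∧ t a = c :=
    Option.map_eq_some_iff.1
  rcases hM with rfl | rfl | rfl | rfl | rfl
  · intro u v c d hu hv
    obtain ⟨a, ha, rfl⟩ := hmap hu
    obtain ⟨b, hb, rfl⟩ := hmap hv
    rw [hα u v a b ha hb]
    exact ⟨fun he => (hpres u v a b ha hb ((hα u v a b ha hb).2 he)).2 he,
      hrefl a ⟨u, ha⟩ b ⟨v, hb⟩⟩
  · intro u v c d hu hv
    obtain ⟨a, ha, rfl⟩ := hmap hu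
    obtain ⟨b, hb, rfl⟩ := hmap hv
    have hne : t a ≠ t b ↔ a ≠ b := (ht.ne_iff ⟨u, ha⟩ ⟨v, hb⟩)
    constructor
    · rintro ⟨huv, htab⟩
      exact (hpres u v a b ha hb huv).2 ((hα u v a b ha hb).1 ⟨huv, hne.1 htab⟩)
    · intro he
      exact ⟨((hα u v a b ha hb).2 (hrefl a ⟨u, ha⟩ b ⟨v, hb⟩ he)).1,
        fun hab => edge_irrefl _ (hab ▸ he)⟩
  · refine ⟨fun u v c hu hv => ?_, fun u v c d hu hv huv => ?_⟩
    · obtain ⟨a, ha, rfl⟩ := hmap hu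
      obtain ⟨b, hb, hab⟩ := hmap hv
      exact hα.1 u v a ha (ht ⟨v, hb⟩ ⟨u, ha⟩ hab ▸ hb)
    · obtain ⟨a, ha, rfl⟩ := hmap hu
      obtain ⟨b, hb, rfl⟩ := hmap hv
      exact (hpres u v a b ha hb huv).2 (hα.2 u v a b ha hb huv)
  · intro u v c d hu hv huv
    obtain ⟨a, ha, rfl⟩ := hmap hu
    obtain ⟨b, hb, rfl⟩ := hmap hv
    exact (hpres u v a b ha hb huv).2 (hα u v a b ha hb huv)
  · intro u v c d hu hv huv hcd
    obtain ⟨a, ha, rfl⟩ := hmap hu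
    obtain ⟨b, hb, rfl⟩ := hmap hv
    exact (hpres u v a b ha hb huv).2 (hα u v a b ha hb huv fun hab => hcd (hab ▸ rfl))

lemma exists_eq_pmul_pmul (hM : IsStarEndMonoid n M) {α β : Fin n → Option (Fin n)}
    (hα : α ∈ M) {e w : Fin n → Fin n} (he : BijOn e (pim α) (pim β))
    (he_edge : ∀ p ∈ pim α, ∀ q ∈ pim α, edge (e p) (e q) ↔ edge p q)
    (hw : ∀ b ∈ pim β, β (w b) = some b)
    (hpres : ∀ u v a b, α u = some a → α v = some b → edge u v →
      (edge (w (e a)) (w (e b)) ↔ edge a b))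
    (hrefl : ∀ a ∈ pim α, ∀ b ∈ pim α, edge (w (e a)) (w (e b)) → edge a b) :
    ∃ g ∈ M, ∃ h ∈ M, α = pmul (pmul g β) h := by
  classical
  let h : Fin n → Option (Fin n) := fun b =>
    if hb : b ∈ pim β then some (he.surjOn hb).choose else none
  have hh_spec : ∀ {b c}, h b = some c → c ∈ pim α ∧ e c = b := by
    intro b c hbc
    by_cases hb : b ∈ pim β
    · simp only [h, dif_pos hb, Option.some.injEq] at hbc
      exact hbc ▸ (he.surjOn hb).choose_spec
    · simp [h, dif_neg hb] at hbc
  have hh_e : ∀ a ∈ pim α, h (e a) = some a := by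
    intro a ha
    have hea := he.mapsTo ha
    have hspec := (he.surjOn hea).choose_spec
    simp only [h, dif_pos hea, he.injOn hspec.1 ha hspec.2]
  have hwe_inj : InjOn (w ∘ e) (pim α) := by
    intro a ha b hb hab
    have := congrArg β hab
    simp only [Function.comp_apply, hw _ (he.mapsTo ha), hw _ (he.mapsTo hb),
      Option.some.injEq] at this
    exact he.injOn ha hb this
  refine ⟨_, hM.map_mem hα hwe_inj hpres hrefl, h, hM.pAutS_subset ⟨?_, ?_⟩, ?_⟩
  · intro u v c hu hv
    exact (hh_spec hu).2.symm.trans (hh_spec hv).2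
  · intro u v c d hu hv
    obtain ⟨hc, rfl⟩ := hh_spec hu
    obtain ⟨hd, rfl⟩ := hh_spec hv
    exact he_edge c hc d hd
  · funext x
    rcases hx : α x with _ | a
    · simp [pmul, hx]
    · simp [pmul, hx, hw _ (he.mapsTo ⟨x, hx⟩), hh_e a ⟨x, hx⟩]

lemma exists_eq_pmul_pmul_of_ncard_le_one
    (hM : IsStarEndMonoid n M) {α β : Fin n → Option (Fin n)} (hα : α ∈ M)
    (hcard : (pim α).ncard = (pim β).ncard) (h1 : (pim α).ncard ≤ 1) :
    ∃ g ∈ M, ∃ h ∈ M, α = pmul (pmul g β) h := by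
  obtain ⟨e, he⟩ := exists_bijOn_of_ncard_eq hcard
  obtain ⟨w, hw⟩ := exists_section β
  have hsub : (pim α).Subsingleton := ncard_le_one_iff_subsingleton.1 h1
  refine hM.exists_eq_pmul_pmul hα he ?_ hw ?_ ?_
  · intro p hp q hq
    rw [hsub hp hq]
    exact iff_of_false (edge_irrefl _) (edge_irrefl _)
  · intro u v a b ha hb _
    rw [hsub ⟨u, ha⟩ ⟨v, hb⟩]
    exact iff_of_false (edge_irrefl _) (edge_irrefl _)
  · intro a ha b hb hedge
    exact absurd (hsub ha hb ▸ hedge) (edge_irrefl _)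

lemma exists_eq_pmul_pmul_of_center_iff (hz : z.val = 0) (hM : IsStarEndMonoid n M)
    {α β : Fin n → Option (Fin n)} (hα : α ∈ M) (hβ : β ∈ M)
    (hcard : (pim α).ncard = (pim β).ncard) (hdom : z ∈ pdom α ↔ z ∈ pdom β)
    (him : z ∈ pim α ↔ z ∈ pim β) :
    ∃ g ∈ M, ∃ h ∈ M, α = pmul (pmul g β) h := by
  obtain ⟨e, he, hez⟩ := exists_bijOn_forall_eq_iff hcard him
  choose w hw hwz using exists_section_eq_iff β z
  have he_edge : ∀ p ∈ pim α, ∀ q ∈ pim α, edge (e p) (e q) ↔ edge p q :=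
    fun p hp q hq => edge_congr hz (hez p hp) (hez q hq)
  by_cases hzα : z ∈ pdom α
  · obtain ⟨v₀, hv₀⟩ := Option.ne_none_iff_exists'.1 (hdom.1 hzα)
    have hcenter : ∀ p ∈ pim α, (w (e p) = z ↔ e p = v₀) := fun p hp => by
      rw [hwz _ (he.mapsTo hp), hv₀, Option.some.injEq, eq_comm]
    have ht : ∀ p ∈ pim α, ∀ q ∈ pim α, edge (w (e p)) (w (e q)) ↔ edge p q := by
      intro p hp q hq
      by_cases hv : v₀ = z
      · subst hv
        exact edge_congr hz ((hcenter p hp).trans (hez p hp)) ((hcenter q hq).trans (hez q hq))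
      · -- `β` folds its domain onto the edge `{v₀, z}`, so `w ∘ e` swaps centre and leaves
        have hpair := (hM.isPwEnd hβ).eq_iff_ne_center hz hv₀ hv
        refine edge_congr_not hz ?_ ?_
        · rw [hcenter p hp, hpair _ (he.mapsTo hp), ne_eq, hez p hp]
        · rw [hcenter q hq, hpair _ (he.mapsTo hq), ne_eq, hez q hq]
    exact hM.exists_eq_pmul_pmul hα he he_edge hw (fun u v a b ha hb _ => ht a ⟨u, ha⟩ b ⟨v, hb⟩)
      fun a ha b hb => (ht a ha b hb).1
  · have hw_ne : ∀ b ∈ pim β, w b ≠ z := fun b hb hwb =>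
      hzα (hdom.2 (by simp [pdom, (hwz b hb).1 hwb]))
    refine hM.exists_eq_pmul_pmul hα he he_edge hw (fun u v a b ha hb huv => ?_)
      fun a ha b hb hedge => ?_
    · rcases eq_or_eq_of_edge hz huv with rfl | rfl
      exacts [absurd (by simp [pdom, ha]) hzα, absurd (by simp [pdom, hb]) hzα]
    · rcases eq_or_eq_of_edge hz hedge with h | h
      exacts [absurd h (hw_ne _ (he.mapsTo ha)), absurd h (hw_ne _ (he.mapsTo hb))]

end IsStarEndMonoid

theorem stmt17 (n : ℕ) (hn : 1 ≤ n) (M : Set (Fin n → Option (Fin n)))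
    (hM : M = PsEndS n ∨ M = PswEndS n ∨ M = IEndS n ∨ M = PEndS n ∨ M = PwEndS n)
    (α β : Fin n → Option (Fin n)) (hα : α ∈ M) (hβ : β ∈ M) :
    GreenJ M α β ↔
      (((pim α).ncard = (pim β).ncard ∧ (pim α).ncard ≤ 1)
        ∨ ((pim α).ncard = (pim β).ncard ∧ 2 ≤ (pim α).ncard
            ∧ ((⟨0, hn⟩ : Fin n) ∈ pdom α ↔ (⟨0, hn⟩ : Fin n) ∈ pdom β)
            ∧ ((⟨0, hn⟩ : Fin n) ∈ pim α ↔ (⟨0, hn⟩ : Fin n) ∈ pim β))) := by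
  have hM : IsStarEndMonoid n M := hM
  have hz : (⟨0, hn⟩ : Fin n).val = 0 := rfl
  constructor
  · rintro ⟨⟨g, hg, h, hh, hαβ⟩, ⟨g', hg', h', hh', hβα⟩⟩
    have hcard : (pim α).ncard = (pim β).ncard :=
      le_antisymm (hαβ ▸ ncard_pim_pmul_pmul_le g β h) (hβα ▸ ncard_pim_pmul_pmul_le g' α h')
    rcases le_or_gt (pim α).ncard 1 with h1 | h2
    · exact Or.inl ⟨hcard, h1⟩
    obtain ⟨hdom, him⟩ :=
      center_mem_of_eq_pmul_pmul hz (hM.isPwEnd hg) (hM.isPwEnd hh) hαβ hcard.ge h2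
    obtain ⟨hdom', him'⟩ :=
      center_mem_of_eq_pmul_pmul hz (hM.isPwEnd hg') (hM.isPwEnd hh') hβα hcard.le (hcard ▸ h2)
    exact Or.inr ⟨hcard, h2, ⟨hdom, hdom'⟩, ⟨him', him⟩⟩
  · rintro (⟨hcard, h1⟩ | ⟨hcard, -, hdom, him⟩)
    · exact ⟨hM.exists_eq_pmul_pmul_of_ncard_le_one hα hcard h1,
        hM.exists_eq_pmul_pmul_of_ncard_le_one hβ hcard.symm (hcard ▸ h1)⟩
    · exact ⟨hM.exists_eq_pmul_pmul_of_center_iff hz hα hβ hcard hdom him,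
        hM.exists_eq_pmul_pmul_of_center_iff hz hβ hα hcard.symm hdom.symm him.symm⟩
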